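/- Every positive divisor of (n^2+1)/2, for n an odd integer, is congruent to 1 modulo 4. -/

import Mathlib

/-! If `n` is odd then `n ^ 2 + 1 = 2 m` with `m` odd, and `n` is a square root of `-1` modulo
every divisor `d` of `m`. Hence `-1` is a square modulo every prime factor `p` of `d`, so
`p % 4 ≠ 3`; as `p` is odd, `p % 4 = 1`, and therefore `d % 4 = 1`. -/

theorem Nat.mod_four_eq_one_of_odd_of_isSquare_neg_one {n : ℕ} (hn : Odd n)
    (hs : IsSquare (-1 : ZMod n)) : n % 4 = 1 := by
  induction n using induction_on_primes with
  | zero => exact absurd hn (by decide)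
  | one => rfl
  | prime_mul p a hp ih =>
    have hp4 : p % 4 ≠ 3 := Nat.mod_four_ne_three_of_mem_primeFactors_of_isSquare_neg_one
      (Nat.mem_primeFactors.mpr ⟨hp, dvd_mul_right p a, hn.pos.ne'⟩) hs
    have hp2 : p % 2 = 1 := Nat.odd_iff.mp (Nat.Odd.of_mul_left hn)
    have ha4 : a % 4 = 1 := ih (Nat.Odd.of_mul_right hn)
      (ZMod.isSquare_neg_one_of_dvd (dvd_mul_left a p) hs)
    rw [Nat.mul_mod, ha4]
    omega

theorem ZMod.isSquare_neg_one_of_dvd_sq_add_one {d : ℕ} {n : ℤ} (h : (d : ℤ) ∣ n ^ 2 + 1) :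
    IsSquare (-1 : ZMod d) := by
  have h0 : ((n ^ 2 + 1 : ℤ) : ZMod d) = 0 := (ZMod.intCast_zmod_eq_zero_iff_dvd _ d).mpr h
  push_cast at h0
  exact ⟨n, by linear_combination -h0⟩

theorem Int.odd_sq_add_one_div_two {n : ℤ} (hn : Odd n) : Odd ((n ^ 2 + 1) / 2) := by
  obtain ⟨k, rfl⟩ := hn
  refine ⟨k ^ 2 + k, ?_⟩
  rw [show (2 * k + 1) ^ 2 + 1 = 2 * (2 * (k ^ 2 + k) + 1) by ring,
    Int.mul_ediv_cancel_left _ two_ne_zero]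

theorem divisor_cong_one_mod_four (n d : ℤ) (hn : Odd n) (hd : 0 < d)
    (hdvd : d ∣ (n ^ 2 + 1) / 2) : d % 4 = 1 := by
  lift d to ℕ using hd.le
  have hodd : Odd d :=
    (Int.natAbs_odd.mpr (Int.odd_sq_add_one_div_two hn)).of_dvd_nat (Int.natCast_dvd.mp hdvd)
  have htwo : (2 : ℤ) ∣ n ^ 2 + 1 := even_iff_two_dvd.mp hn.pow.add_one
  have hs : IsSquare (-1 : ZMod d) :=
    ZMod.isSquare_neg_one_of_dvd_sq_add_one (hdvd.trans (EuclideanDomain.div_dvd_of_dvd htwo))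
  exact_mod_cast Nat.mod_four_eq_one_of_odd_of_isSquare_neg_one hodd hs
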